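/- (One step of the extended update contracts toward the orthogonal component.) Let U ∈ ℝ^{m×m₁×p} be such that U_{:j:}^⊤∗U_{:j:} is t-invertible for every j ∈ {1,…,m₁}, and let q be a probability distribution on {1,…,m₁}. Let Y⊥ ∈ ℝ^{m×l×p} satisfy U^⊤∗Y⊥ = 0. For W ∈ ℝ^{m×l×p} and j ∈ {1,…,m₁} define W⁺(j) = W − U_{:j:} ∗ (U_{:j:}^⊤∗U_{:j:})^{-1} ∗ (U_{:j:}^⊤∗W). Then Σ_{j=1}^{m₁} q(j)·‖W⁺(j) − Y⊥‖_F² ≤ (1 − σ_min(Σ_{j=1}^{m₁} q(j)·bcirc(P_{U_{:j:}^⊤})))·‖W − Y⊥‖_F², where P_{U_{:j:}^⊤} = U_{:j:} ∗ (U_{:j:}^⊤∗U_{:j:})^{-1} ∗ U_{:j:}^⊤. -/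

import Mathlib

open Matrix
open scoped BigOperators

/-- A real third-order tensor with row index `I`, column index `J`, and `p` frontal slices. -/
abbrev Tensor (I J : Type*) (p : ℕ) := I → J → Fin p → ℝ

namespace Tensor

variable {I J K : Type*} {p : ℕ}

/-- Block-circulant matricization: `bcirc A [(i,k),(j,l)] = A i j ((k - l) mod p)`. -/
def bcirc (A : Tensor I J p) : Matrix (I × Fin p) (J × Fin p) ℝ :=
  Matrix.of fun ik jl => A ik.1 jl.1 (ik.2 - jl.2)

/-- Unfolding along the second mode: `unfold B [(j,k), i] = B j i k`. -/
def unfold {S : Type*} (B : Tensor J S p) : Matrix (J × Fin p) S ℝ :=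
  Matrix.of fun jk s => B jk.1 s jk.2

/-- The t-product, the unique tensor with `unfold (A ∗ B) = bcirc A * unfold B`. -/
def tprod [Fintype J] (A : Tensor I J p) (B : Tensor J K p) : Tensor I K p :=
  fun i s k => ∑ j : J, ∑ l : Fin p, A i j (k - l) * B j s l

/-- Tensor transpose: `Aᵀ j i k = A i j ((-k) mod p)`. -/
def ttrans (A : Tensor I J p) : Tensor J I p := fun j i k => A i j (-k)

/-- The identity tensor: first frontal slice is the identity, the others are zero. -/
def tid (I : Type*) [DecidableEq I] (p : ℕ) : Tensor I I p :=
  fun i j k => if i = j ∧ (k : ℕ) = 0 then 1 else 0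

/-- t-invertibility of a square tensor. -/
def TInvertible [Fintype I] [DecidableEq I] (S : Tensor I I p) : Prop :=
  ∃ T : Tensor I I p, tprod S T = tid I p ∧ tprod T S = tid I p

open Classical in
/-- The t-inverse of a square tensor (junk value when not t-invertible). -/
noncomputable def tinv [Fintype I] [DecidableEq I] (S : Tensor I I p) : Tensor I I p :=
  if h : TInvertible S then h.choose else 0

/-- The projection tensor `P_M = Mᵀ ∗ (M ∗ Mᵀ)⁻¹ ∗ M`. -/
noncomputable def proj [Fintype I] [DecidableEq I] [Fintype J] (M : Tensor I J p) :
    Tensor J J p :=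
  tprod (ttrans M) (tprod (tinv (tprod M (ttrans M))) M)

/-- The projection tensor `P_{Mᵀ} = M ∗ (Mᵀ ∗ M)⁻¹ ∗ Mᵀ`. -/
noncomputable def projT [Fintype I] [Fintype J] [DecidableEq J] (M : Tensor I J p) :
    Tensor I I p :=
  tprod M (tprod (tinv (tprod (ttrans M) M)) (ttrans M))

/-- The Frobenius inner product of two tensors. -/
def tinner [Fintype I] [Fintype J] (A B : Tensor I J p) : ℝ :=
  ∑ i : I, ∑ j : J, ∑ k : Fin p, A i j k * B i j k

/-- The squared Frobenius norm of a tensor. -/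
def frobSq [Fintype I] [Fintype J] (A : Tensor I J p) : ℝ :=
  ∑ i : I, ∑ j : J, ∑ k : Fin p, (A i j k) ^ 2

/-- The Frobenius norm of a tensor. -/
noncomputable def frobNorm [Fintype I] [Fintype J] (A : Tensor I J p) : ℝ :=
  Real.sqrt (frobSq A)

/-- The subtensor of the row slices of `U` indexed by `μ`. -/
def rowSub (U : Tensor I J p) (μ : Finset I) : Tensor {i // i ∈ μ} J p :=
  fun i => U i.1

/-- The `j`-th lateral slice of `U`, as an `I × 1 × p` tensor. -/
def latSlice (U : Tensor I J p) (j : J) : Tensor I (Fin 1) p :=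
  fun i _ k => U i j k

/-- One (block) Kaczmarz step for the system with operator `U`, sampled row block `μ`,
current iterate `X` and measurement block `Bμ`:
`X ← X - U_μᵀ ∗ (U_μ ∗ U_μᵀ)⁻¹ ∗ (U_μ ∗ X - Bμ)`. -/
noncomputable def kaczStep [DecidableEq I] [Fintype J] (U : Tensor I J p) (μ : Finset I)
    (X : Tensor J K p) (Bμ : Tensor {i // i ∈ μ} K p) : Tensor J K p :=
  X - tprod (ttrans (rowSub U μ))
    (tprod (tinv (tprod (rowSub U μ) (ttrans (rowSub U μ))))
      (tprod (rowSub U μ) X - Bμ))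

/-- One extended (column-like) step:
`W ← W - U_{:j:} ∗ (U_{:j:}ᵀ ∗ U_{:j:})⁻¹ ∗ (U_{:j:}ᵀ ∗ W)`. -/
noncomputable def extStep [Fintype I] (U : Tensor I J p) (j : J) (W : Tensor I K p) :
    Tensor I K p :=
  W - tprod (latSlice U j)
    (tprod (tinv (tprod (ttrans (latSlice U j)) (latSlice U j)))
      (tprod (ttrans (latSlice U j)) W))

end Tensor

/-- Squared Frobenius norm of a real matrix. -/
def matFrobSq {I J : Type*} [Fintype I] [Fintype J] (A : Matrix I J ℝ) : ℝ :=
  ∑ i : I, ∑ j : J, (A i j) ^ 2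

/-- Spectral norm (largest singular value) of a real matrix, as the supremum of `‖A x‖`
over unit vectors `x`. -/
noncomputable def specNorm {I J : Type*} [Fintype I] [Fintype J] (A : Matrix I J ℝ) : ℝ :=
  sSup {r : ℝ | ∃ x : J → ℝ, (∑ j : J, (x j) ^ 2) = 1 ∧
    r = Real.sqrt (∑ i : I, (A.mulVec x i) ^ 2)}

/-- Smallest eigenvalue of a symmetric real matrix, via the Rayleigh quotient:
`σ_min(S) = inf {xᵀ S x : ‖x‖ = 1}`. -/
noncomputable def minEig {I : Type*} [Fintype I] (S : Matrix I I ℝ) : ℝ :=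
  sInf {r : ℝ | ∃ x : I → ℝ, (∑ i : I, (x i) ^ 2) = 1 ∧
    r = ∑ i : I, x i * S.mulVec x i}

/-! Under `bcirc` and `unfold` the t-product becomes the matrix product, so with
`z = unfold (W - Y⊥)` the step `W ↦ W⁺(j)` becomes `z ↦ z - P_j z`, where `P_j = bcirc P_{U_{:j:}ᵀ}`
is symmetric and idempotent (an orthogonal projection), and `P_j` kills `unfold Y⊥` because
`U_{:j:}ᵀ ∗ Y⊥ = 0`. Hence `‖z - P_j z‖² = ‖z‖² - tr (zᵀ P_j z)`; averaging over `q` gives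
`‖z‖² - tr (zᵀ S z)` with `S = Σ_j q_j P_j`, and the Rayleigh bound `σ_min(S) ‖z‖² ≤ tr (zᵀ S z)`,
applied column by column, concludes. -/

namespace Matrix

variable {m n : Type*} [Fintype m] [Fintype n]

theorem isSymm_mul_mul_transpose_of_gram_mul_eq_one {R : Type*} [CommRing R] [DecidableEq n]
    {A : Matrix m n R} {V : Matrix n n R} (h : Aᵀ * A * V = 1) : (A * V * Aᵀ).IsSymm := by
  have hV : Vᵀ = V := by
    rw [← inv_eq_right_inv h, transpose_nonsing_inv, transpose_mul, transpose_transpose]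
  rw [IsSymm, transpose_mul, transpose_mul, transpose_transpose, hV, Matrix.mul_assoc]

theorem isIdempotentElem_mul_mul_transpose_of_gram_mul_eq_one {R : Type*} [CommRing R]
    [DecidableEq n] {A : Matrix m n R} {V : Matrix n n R} (h : Aᵀ * A * V = 1) :
    IsIdempotentElem (A * V * Aᵀ) := by
  calc A * V * Aᵀ * (A * V * Aᵀ) = A * V * (Aᵀ * A * V) * Aᵀ := by
        simp only [Matrix.mul_assoc]
    _ = A * V * Aᵀ := by rw [h, Matrix.mul_one]

theorem matFrobSq_eq_trace (a : Matrix m n ℝ) : matFrobSq a = trace (aᵀ * a) := by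
  simp only [matFrobSq, trace, diag, mul_apply, transpose_apply, sq]
  exact Finset.sum_comm

theorem matFrobSq_sub_mul_of_isSymm_of_isIdempotentElem {P : Matrix m m ℝ} (hsymm : P.IsSymm)
    (hidem : IsIdempotentElem P) (z : Matrix m n ℝ) :
    matFrobSq (z - P * z) = matFrobSq z - trace (zᵀ * (P * z)) := by
  have hPP : zᵀ * P * (P * z) = zᵀ * (P * z) := by
    rw [Matrix.mul_assoc, ← Matrix.mul_assoc P, hidem.eq]
  rw [matFrobSq_eq_trace, matFrobSq_eq_trace, transpose_sub, transpose_mul, hsymm.eq,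
    Matrix.sub_mul, Matrix.mul_sub, Matrix.mul_sub, hPP, ← Matrix.mul_assoc zᵀ P z]
  simp only [trace_sub]
  ring

theorem bddBelow_rayleigh (S : Matrix m m ℝ) :
    BddBelow {r : ℝ | ∃ x : m → ℝ, ∑ i, x i ^ 2 = 1 ∧ r = ∑ i, x i * S.mulVec x i} := by
  refine ⟨-∑ i, ∑ i', |S i i'|, ?_⟩
  rintro r ⟨x, hx, rfl⟩
  have hx1 : ∀ i, |x i| ≤ 1 := fun i => by
    rw [← sq_le_one_iff_abs_le_one, ← hx]
    exact Finset.single_le_sum (fun i _ => sq_nonneg (x i)) (Finset.mem_univ i)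
  simp only [mulVec, dotProduct, Finset.mul_sum, ← Finset.sum_neg_distrib]
  refine Finset.sum_le_sum fun i _ => Finset.sum_le_sum fun i' _ => ?_
  have hle : |x i * (S i i' * x i')| ≤ |S i i'| := by
    rw [abs_mul, abs_mul]
    calc |x i| * (|S i i'| * |x i'|) ≤ 1 * (|S i i'| * 1) := by gcongr <;> exact hx1 _
      _ = |S i i'| := by ring
  exact (abs_le.mp hle).1

theorem minEig_mul_sum_sq_le (S : Matrix m m ℝ) (x : m → ℝ) :
    minEig S * ∑ i, x i ^ 2 ≤ ∑ i, x i * S.mulVec x i := by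
  rcases (Finset.sum_nonneg fun i _ => sq_nonneg (x i) : 0 ≤ ∑ i, x i ^ 2).eq_or_lt
    with hc | hc
  · have hx : x = 0 := funext fun i =>
      pow_eq_zero_iff two_ne_zero |>.mp <|
        (Finset.sum_eq_zero_iff_of_nonneg fun i _ => sq_nonneg (x i)).mp hc.symm i
          (Finset.mem_univ i)
    simp [hx]
  have hscale : ∀ t : ℝ, ∑ i, (t • x) i * S.mulVec (t • x) i =
      t ^ 2 * ∑ i, x i * S.mulVec x i := fun t => by
    simp only [mulVec_smul, Pi.smul_apply, smul_eq_mul, Finset.mul_sum]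
    exact Finset.sum_congr rfl fun i _ => by ring
  have hunit : ∑ i, ((√(∑ i, x i ^ 2))⁻¹ • x) i ^ 2 = 1 := by
    simp only [Pi.smul_apply, smul_eq_mul, mul_pow, ← Finset.mul_sum, inv_pow]
    rw [Real.sq_sqrt hc.le, inv_mul_cancel₀ hc.ne']
  have hmin := csInf_le (bddBelow_rayleigh S) ⟨_, hunit, rfl⟩
  rw [hscale, inv_pow, Real.sq_sqrt hc.le, inv_mul_eq_div] at hmin
  exact (le_div_iff₀ hc).mp hmin

theorem minEig_mul_matFrobSq_le (S : Matrix m m ℝ) (z : Matrix m n ℝ) :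
    minEig S * matFrobSq z ≤ trace (zᵀ * (S * z)) := by
  have hcol : trace (zᵀ * (S * z)) = ∑ s, ∑ r, z r s * S.mulVec (fun r' => z r' s) r := by
    simp only [trace, diag, mul_apply, mulVec, dotProduct, transpose_apply]
  rw [hcol, matFrobSq, Finset.sum_comm, Finset.mul_sum]
  exact Finset.sum_le_sum fun s _ => minEig_mul_sum_sq_le S _

theorem sum_mul_matFrobSq_sub_mul_le {ι : Type*} [Fintype ι] (P : ι → Matrix m m ℝ) (q : ι → ℝ)
    (hq : ∑ j, q j = 1) (hsymm : ∀ j, (P j).IsSymm) (hidem : ∀ j, IsIdempotentElem (P j))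
    (z : Matrix m n ℝ) :
    ∑ j, q j * matFrobSq (z - P j * z) ≤ (1 - minEig (∑ j, q j • P j)) * matFrobSq z := by
  have hsum : ∑ j, q j * matFrobSq (z - P j * z) =
      matFrobSq z - trace (zᵀ * ((∑ j, q j • P j) * z)) := by
    simp only [matFrobSq_sub_mul_of_isSymm_of_isIdempotentElem (hsymm _) (hidem _), mul_sub,
      Finset.sum_sub_distrib, ← Finset.sum_mul, hq, one_mul, Matrix.sum_mul, Matrix.mul_sum,
      trace_sum, Matrix.smul_mul, Matrix.mul_smul, trace_smul, smul_eq_mul]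
  rw [hsum]
  linarith [minEig_mul_matFrobSq_le (∑ j, q j • P j) z]

end Matrix

namespace Tensor

variable {I J K : Type*} {p : ℕ}

theorem unfold_tprod [Fintype J] (A : Tensor I J p) (B : Tensor J K p) :
    unfold (tprod A B) = bcirc A * unfold B := by
  ext ⟨i, k⟩ s
  simp [unfold, tprod, bcirc, Matrix.mul_apply, Fintype.sum_prod_type]

theorem unfold_sub (A B : Tensor I J p) : unfold (A - B) = unfold A - unfold B := rfl

theorem unfold_zero : unfold (0 : Tensor I J p) = 0 := rfl

theorem frobSq_eq_matFrobSq_unfold [Fintype I] [Fintype J] (A : Tensor I J p) :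
    frobSq A = matFrobSq (unfold A) := by
  simp only [frobSq, matFrobSq, unfold, Matrix.of_apply, Fintype.sum_prod_type]
  exact Finset.sum_congr rfl fun i _ => Finset.sum_comm

theorem ttrans_latSlice (U : Tensor I J p) (j : J) :
    ttrans (latSlice U j) = fun _ => ttrans U j := rfl

section NeZero

variable [NeZero p]

theorem bcirc_tprod [Fintype J] (A : Tensor I J p) (B : Tensor J K p) :
    bcirc (tprod A B) = bcirc A * bcirc B := by
  ext ⟨i, k⟩ ⟨j, l⟩
  simp only [bcirc, tprod, Matrix.mul_apply, Fintype.sum_prod_type, Matrix.of_apply]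
  refine Finset.sum_congr rfl fun j' _ => Fintype.sum_equiv (Equiv.addRight l) _ _ fun l' => ?_
  simp only [Equiv.coe_addRight, add_sub_cancel_right, sub_add_eq_sub_sub_swap]

theorem bcirc_ttrans (A : Tensor I J p) : bcirc (ttrans A) = (bcirc A)ᵀ := by
  ext ⟨j, l⟩ ⟨i, k⟩
  simp [bcirc, ttrans]

theorem bcirc_tid [DecidableEq I] : bcirc (tid I p) = 1 := by
  ext ⟨i, k⟩ ⟨j, l⟩
  simp [bcirc, tid, Matrix.one_apply, sub_eq_zero]

theorem bcirc_mul_bcirc_tinv [Fintype I] [DecidableEq I] {S : Tensor I I p}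
    (hS : TInvertible S) : bcirc S * bcirc (tinv S) = 1 := by
  rw [← bcirc_tprod, ← bcirc_tid, tinv, dif_pos hS, hS.choose_spec.1]

theorem bcirc_projT [Fintype I] [Fintype J] [DecidableEq J] (M : Tensor I J p) :
    bcirc (projT M) = bcirc M * bcirc (tinv (tprod (ttrans M) M)) * (bcirc M)ᵀ := by
  rw [projT, bcirc_tprod, bcirc_tprod, bcirc_ttrans, Matrix.mul_assoc]

theorem unfold_extStep [Fintype I] (U : Tensor I J p) (j : J) (W : Tensor I K p) :
    unfold (extStep U j W) = unfold W - bcirc (projT (latSlice U j)) * unfold W := by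
  rw [extStep, unfold_sub, unfold_tprod, unfold_tprod, unfold_tprod, bcirc_projT,
    bcirc_ttrans, Matrix.mul_assoc, Matrix.mul_assoc]

theorem bcirc_projT_latSlice_mul_unfold [Fintype I] [Fintype J] {U : Tensor I J p}
    {Y : Tensor I K p} (hY : tprod (ttrans U) Y = 0) (j : J) :
    bcirc (projT (latSlice U j)) * unfold Y = 0 := by
  have hslice : tprod (ttrans (latSlice U j)) Y = 0 := by
    rw [ttrans_latSlice]
    funext _ s k
    exact congrFun (congrFun (congrFun hY j) s) k
  rw [bcirc_projT, Matrix.mul_assoc, ← bcirc_ttrans, ← unfold_tprod, hslice, unfold_zero,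
    Matrix.mul_zero]

theorem bcirc_gram_mul_bcirc_tinv [Fintype I] [Fintype J] [DecidableEq J] {M : Tensor I J p}
    (hM : TInvertible (tprod (ttrans M) M)) :
    (bcirc M)ᵀ * bcirc M * bcirc (tinv (tprod (ttrans M) M)) = 1 := by
  rw [← bcirc_ttrans, ← bcirc_tprod, bcirc_mul_bcirc_tinv hM]

theorem isSymm_bcirc_projT [Fintype I] [Fintype J] [DecidableEq J] {M : Tensor I J p}
    (hM : TInvertible (tprod (ttrans M) M)) : (bcirc (projT M)).IsSymm := by
  rw [bcirc_projT]
  exact Matrix.isSymm_mul_mul_transpose_of_gram_mul_eq_one (bcirc_gram_mul_bcirc_tinv hM)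

theorem isIdempotentElem_bcirc_projT [Fintype I] [Fintype J] [DecidableEq J]
    {M : Tensor I J p} (hM : TInvertible (tprod (ttrans M) M)) :
    IsIdempotentElem (bcirc (projT M)) := by
  rw [bcirc_projT]
  exact Matrix.isIdempotentElem_mul_mul_transpose_of_gram_mul_eq_one
    (bcirc_gram_mul_bcirc_tinv hM)

end NeZero

end Tensor

open Tensor in
theorem stmt8_general {m m₁ l p : ℕ} (U : Tensor (Fin m) (Fin m₁) p)
    (hinv : ∀ j : Fin m₁, TInvertible (tprod (ttrans (latSlice U j)) (latSlice U j)))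
    (q : Fin m₁ → ℝ) (hqsum : ∑ j, q j = 1)
    (Yp : Tensor (Fin m) (Fin l) p) (hYp : tprod (ttrans U) Yp = 0)
    (W : Tensor (Fin m) (Fin l) p) :
    ∑ j : Fin m₁, q j * frobSq (extStep U j W - Yp) ≤
      (1 - minEig (∑ j : Fin m₁, q j • bcirc (projT (latSlice U j)))) *
        frobSq (W - Yp) := by
  rcases eq_zero_or_neZero p with rfl | _
  · simp [frobSq]
  have hstep : ∀ j, unfold (extStep U j W - Yp) =
      unfold (W - Yp) - bcirc (projT (latSlice U j)) * unfold (W - Yp) := fun j => by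
    rw [unfold_sub, unfold_extStep, unfold_sub, Matrix.mul_sub,
      bcirc_projT_latSlice_mul_unfold hYp, sub_zero]
    abel
  simp only [frobSq_eq_matFrobSq_unfold, hstep]
  exact Matrix.sum_mul_matFrobSq_sub_mul_le _ q hqsum (fun j => isSymm_bcirc_projT (hinv j))
    (fun j => isIdempotentElem_bcirc_projT (hinv j)) _

open Tensor in
/-- one step of the extended update contracts toward the orthogonal component:
for `Y⊥` with `Uᵀ∗Y⊥ = 0` and `W⁺(j) = W − U_{:j:}∗(U_{:j:}ᵀ∗U_{:j:})⁻¹∗(U_{:j:}ᵀ∗W)`,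
`Σ_j q j ‖W⁺(j) − Y⊥‖_F² ≤ (1 − σ_min(Σ_j q j • bcirc P_{U_{:j:}ᵀ})) ‖W − Y⊥‖_F²`. -/
theorem stmt8 {m m₁ l p : ℕ} (U : Tensor (Fin m) (Fin m₁) p)
    (hinv : ∀ j : Fin m₁, TInvertible (tprod (ttrans (latSlice U j)) (latSlice U j)))
    (q : Fin m₁ → ℝ) (hq : ∀ j, 0 ≤ q j) (hqsum : ∑ j, q j = 1)
    (Yp : Tensor (Fin m) (Fin l) p) (hYp : tprod (ttrans U) Yp = 0)
    (W : Tensor (Fin m) (Fin l) p) :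
    ∑ j : Fin m₁, q j * frobSq (extStep U j W - Yp) ≤
      (1 - minEig (∑ j : Fin m₁, q j • bcirc (projT (latSlice U j)))) *
        frobSq (W - Yp) :=
  stmt8_general U hinv q hqsum Yp hYp W
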